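/- Let p be a prime and let 1 → A → B →(λ) C → 1 be a split short exact sequence with section σ : C → B such that B is a p-almost direct product of A and C. If A and C are finitely generated and both A and C are residually p-finite, then B is residually p-finite. -/

import Mathlib

open scoped commutatorElement

/-- The lower `F_p`-linear central filtration `(γₙᵖ G)ₙ` of a group `G`:
`gammaP p 1 = ⊤` (i.e. `γ₁ᵖ G = G`) and `γ_{n+1}ᵖ G` is the subgroup generated by
`[G, γₙᵖ G] ∪ {xᵖ : x ∈ γₙᵖ G}`.  (The value at `0` is junk, set to `⊤`.) -/
def gammaP (p : ℕ) {G : Type*} [Group G] : ℕ → Subgroup G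
  | 0 => ⊤
  | 1 => ⊤
  | n + 2 =>
    Subgroup.closure
      ({x : G | ∃ g y : G, y ∈ gammaP p (n + 1) ∧ x = ⁅g, y⁆} ∪
       {x : G | ∃ y : G, y ∈ gammaP p (n + 1) ∧ x = y ^ p})

/-- A group `G` is residually `p`-finite if every nontrivial element is detected by a
homomorphism onto a finite `p`-group. -/
def IsResiduallyPFinite (p : ℕ) (G : Type*) [Group G] : Prop :=
  ∀ g : G, g ≠ 1 →
    ∃ (H : Type) (_ : Group H) (_ : Finite H) (φ : G →* H), IsPGroup p H ∧ φ g ≠ 1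

/-!
Write `A = ker f`. For a finitely generated group `G`, residual `p`-finiteness amounts to
`⋂ₙ γₙᵖ G = 1`: every finite `p`-group has some trivial `γₙᵖ`, and the quotients `G ⧸ γₙᵖ G`
are finite `p`-groups. Since `C` acts trivially on `A ⧸ γ₂ᵖ A`, the three subgroup
lemma gives, by induction, `⁅γᵢᵖ A, C⁆ ≤ γᵢ₊₁ᵖ A` and `⁅A, γⱼᵖ C⁆ ≤ γⱼ₊₁ᵖ A`. Hence the subgroups
`γₙᵖ A ⋊ γₙᵖ C` form a `p`-central filtration of `B` and contain `γₙᵖ B`, so `γₙᵖ B ∩ A ≤ γₙᵖ A`.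
An element of `⋂ γₙᵖ B` then maps into `⋂ γₙᵖ C = 1`, hence lies in `⋂ γₙᵖ A = 1`.
-/

theorem commutatorElement_pow_right_of_commute {G : Type*} [Group G] {g x : G}
    (h : Commute ⁅g, x⁆ x) (k : ℕ) : ⁅g, x ^ k⁆ = ⁅g, x⁆ ^ k := by
  induction k with
  | zero => simp
  | succ k ih =>
    rw [pow_succ', commutatorElement_mul_right_eq_mul_conj, ih, mul_assoc _ x,
      ← (h.pow_left k).eq, pow_succ']
    group

namespace Subgroup

variable {G : Type*} [Group G] {N : Subgroup G} [N.Normal]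

theorem commutator_le_iff_map_mk' {H K : Subgroup G} :
    ⁅H, K⁆ ≤ N ↔ ⁅H.map (QuotientGroup.mk' N), K.map (QuotientGroup.mk' N)⁆ = ⊥ := by
  rw [← map_commutator, map_eq_bot_iff, QuotientGroup.ker_mk']

theorem commutator_commutator_le_of_rotate {H₁ H₂ H₃ : Subgroup G}
    (h₁ : ⁅⁅H₂, H₃⁆, H₁⁆ ≤ N) (h₂ : ⁅⁅H₃, H₁⁆, H₂⁆ ≤ N) : ⁅⁅H₁, H₂⁆, H₃⁆ ≤ N := by
  simp only [commutator_le_iff_map_mk', map_commutator] at h₁ h₂ ⊢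
  exact commutator_commutator_eq_bot_of_rotate h₁ h₂

theorem commutator_sup_left_le {H₁ H₂ K : Subgroup G} (h₁ : ⁅H₁, K⁆ ≤ N) (h₂ : ⁅H₂, K⁆ ≤ N) :
    ⁅H₁ ⊔ H₂, K⁆ ≤ N := by
  simp only [commutator_le_iff_map_mk', commutator_eq_bot_iff_le_centralizer, map_sup] at *
  exact sup_le h₁ h₂

theorem commutator_sup_right_le {H K₁ K₂ : Subgroup G} (h₁ : ⁅H, K₁⁆ ≤ N) (h₂ : ⁅H, K₂⁆ ≤ N) :
    ⁅H, K₁ ⊔ K₂⁆ ≤ N := by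
  rw [commutator_comm] at h₁ h₂ ⊢
  exact commutator_sup_left_le h₁ h₂

theorem commutator_closure_le {H : Subgroup G} {S : Set G}
    (h : ∀ x ∈ H, ∀ y ∈ S, ⁅x, y⁆ ∈ N) : ⁅H, closure S⁆ ≤ N := by
  rw [commutator_le_iff_map_mk', commutator_comm, commutator_eq_bot_iff_le_centralizer,
    MonoidHom.map_closure, closure_le]
  rintro _ ⟨y, hy, rfl⟩ _ ⟨x, hx, rfl⟩
  rw [← commutatorElement_eq_one_iff_mul_comm, ← map_commutatorElement, ← MonoidHom.mem_ker,
    QuotientGroup.ker_mk']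
  exact h x hx y hy

theorem commutatorElement_pow_mem {g x : G} {k : ℕ} (hc : ⁅⁅g, x⁆, x⁆ ∈ N)
    (hk : ⁅g, x⁆ ^ k ∈ N) : ⁅g, x ^ k⁆ ∈ N := by
  rw [← QuotientGroup.ker_mk' N, MonoidHom.mem_ker] at *
  simp only [map_commutatorElement, map_pow] at *
  rwa [commutatorElement_pow_right_of_commute (commutatorElement_eq_one_iff_commute.mp hc)]

theorem mul_pow_mul_inv_mem {u v : G} (h : ⁅u, v⁆ ∈ N) (k : ℕ) :
    (u * v) ^ k * (u ^ k * v ^ k)⁻¹ ∈ N := by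
  rw [← QuotientGroup.ker_mk' N, MonoidHom.mem_ker] at *
  simp only [map_commutatorElement, map_pow, map_mul, map_inv] at *
  rw [(commutatorElement_eq_one_iff_commute.mp h).mul_pow, mul_inv_cancel]

end Subgroup

section gammaP

variable {G : Type*} [Group G] {p : ℕ}

theorem gammaP_one : gammaP p 1 = (⊤ : Subgroup G) := rfl

theorem gammaP_add_two (n : ℕ) : gammaP p (n + 2) = Subgroup.closure
    ({x : G | ∃ g y : G, y ∈ gammaP p (n + 1) ∧ x = ⁅g, y⁆} ∪
     {x : G | ∃ y : G, y ∈ gammaP p (n + 1) ∧ x = y ^ p}) := rfl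

theorem commutatorElement_mem_gammaP_succ {n : ℕ} (g : G) {y : G} (hy : y ∈ gammaP p n) :
    ⁅g, y⁆ ∈ gammaP p (n + 1) := by
  cases n with
  | zero => trivial
  | succ n => exact Subgroup.subset_closure (Or.inl ⟨g, y, hy, rfl⟩)

theorem pow_mem_gammaP_succ {n : ℕ} {y : G} (hy : y ∈ gammaP p n) :
    y ^ p ∈ gammaP p (n + 1) := by
  cases n with
  | zero => trivial
  | succ n => exact Subgroup.subset_closure (Or.inr ⟨y, hy, rfl⟩)

theorem commutator_top_gammaP_le (n : ℕ) :
    ⁅(⊤ : Subgroup G), gammaP p n (G := G)⁆ ≤ gammaP p (n + 1) :=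
  Subgroup.commutator_le.mpr fun g _ _ hy => commutatorElement_mem_gammaP_succ (p := p) g hy

theorem pow_prime_pow_mem_gammaP (g : G) (n : ℕ) : g ^ p ^ n ∈ gammaP p (n + 1) := by
  induction n with
  | zero => trivial
  | succ n ih => rw [pow_succ, pow_mul]; exact pow_mem_gammaP_succ ih

theorem map_gammaP_le {H : Type*} [Group H] (φ : G →* H) :
    ∀ n, (gammaP p n).map φ ≤ gammaP p n
  | 0 | 1 => le_top
  | n + 2 => by
    rw [gammaP_add_two, MonoidHom.map_closure, Subgroup.closure_le]
    rintro _ ⟨_, ⟨g, y, hy, rfl⟩ | ⟨y, hy, rfl⟩, rfl⟩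
    · rw [map_commutatorElement]
      exact commutatorElement_mem_gammaP_succ _ (map_gammaP_le φ (n + 1) ⟨y, hy, rfl⟩)
    · rw [map_pow]
      exact pow_mem_gammaP_succ (map_gammaP_le φ (n + 1) ⟨y, hy, rfl⟩)

instance gammaP_characteristic (n : ℕ) : (gammaP p n (G := G)).Characteristic :=
  Subgroup.characteristic_iff_map_le.mpr fun φ => map_gammaP_le φ.toMonoidHom n

theorem gammaP_succ_le (n : ℕ) : gammaP p (n + 1) ≤ gammaP p n (G := G) := by
  cases n with
  | zero => exact le_top
  | succ n =>
    rw [gammaP_add_two, Subgroup.closure_le]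
    rintro _ (⟨g, y, hy, rfl⟩ | ⟨y, hy, rfl⟩)
    · have : (gammaP p (n + 1) (G := G)).Normal := inferInstance
      exact mul_mem (this.conj_mem y hy g) (inv_mem hy)
    · exact pow_mem hy p

theorem gammaP_le_of_commutator_le {F : ℕ → Subgroup G} (h₁ : F 1 = ⊤)
    (hcomm : ∀ n, ⁅(⊤ : Subgroup G), F (n + 1)⁆ ≤ F (n + 2))
    (hpow : ∀ n, ∀ x ∈ F (n + 1), x ^ p ∈ F (n + 2)) :
    ∀ n, gammaP p (n + 1) ≤ F (n + 1)
  | 0 => h₁.ge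
  | n + 1 => by
    rw [gammaP_add_two, Subgroup.closure_le]
    rintro _ (⟨g, y, hy, rfl⟩ | ⟨y, hy, rfl⟩)
    · exact hcomm n (Subgroup.commutator_mem_commutator trivial
        (gammaP_le_of_commutator_le h₁ hcomm hpow n hy))
    · exact hpow n y (gammaP_le_of_commutator_le h₁ hcomm hpow n hy)

end gammaP

theorem commutator_map_gammaP_le {G T : Type*} [Group G] [Group T] {p : ℕ} (ψ : T →* G)
    {N : ℕ → Subgroup G} [∀ n, (N n).Normal] (hpow : ∀ n, ∀ x ∈ N n, x ^ p ∈ N (n + 1))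
    (hcomm : ∀ n, ⁅N n, ψ.range⁆ ≤ N (n + 1)) (j : ℕ) :
    ∀ {X : Subgroup G} {k : ℕ}, ⁅X, ψ.range⁆ ≤ N (k + 1) →
      ⁅X, (gammaP p (j + 1)).map ψ⁆ ≤ N (k + j + 1) := by
  induction j with
  | zero => intro X k hX; rwa [gammaP_one, ← MonoidHom.range_eq_map]
  | succ j ih =>
    intro X k hX
    rw [gammaP_add_two, MonoidHom.map_closure]
    refine Subgroup.commutator_closure_le ?_
    rintro x hx _ ⟨_, ⟨g, y, hy, rfl⟩ | ⟨y, hy, rfl⟩, rfl⟩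
    · have h : ⁅⁅ψ.range, (gammaP p (j + 1)).map ψ⁆, X⁆ ≤ N (k + j + 2) := by
        refine Subgroup.commutator_commutator_le_of_rotate ?_ ?_
        · rw [Subgroup.commutator_comm _ X]
          exact (Subgroup.commutator_mono (ih hX) le_rfl).trans (hcomm _)
        · have h' := ih (hcomm (k + 1))
          rw [Nat.add_right_comm k 1 j] at h'
          exact (Subgroup.commutator_mono hX le_rfl).trans h'
      rw [map_commutatorElement, ← commutatorElement_inv]
      exact inv_mem (h (Subgroup.commutator_mem_commutator
        (Subgroup.commutator_mem_commutator ⟨g, rfl⟩ ⟨y, hy, rfl⟩) hx))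
    · rw [map_pow]
      have hxy : ⁅x, ψ y⁆ ∈ N (k + j + 1) :=
        ih hX (Subgroup.commutator_mem_commutator hx ⟨y, hy, rfl⟩)
      exact Subgroup.commutatorElement_pow_mem
        (hcomm _ (Subgroup.commutator_mem_commutator hxy ⟨y, rfl⟩)) (hpow _ _ hxy)

section ResiduallyPFinite

variable {p : ℕ}

theorem gammaP_eq_bot_of_le_center {G : Type*} [Group G] {K : Subgroup G}
    (hK : K ≤ Subgroup.center G) (hKp : ∀ x ∈ K, x ^ p = 1) {n : ℕ}
    (hn : gammaP p (n + 1) ≤ K) : gammaP p (n + 2) = (⊥ : Subgroup G) := by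
  rw [eq_bot_iff, gammaP_add_two, Subgroup.closure_le]
  rintro _ (⟨g, y, hy, rfl⟩ | ⟨y, hy, rfl⟩)
  · exact commutatorElement_eq_one_iff_mul_comm.mpr (Subgroup.mem_center_iff.mp (hK (hn hy)) g)
  · exact hKp y (hn hy)

/-- By induction on `|G|`: modulo a central subgroup of order `p` the filtration dies, and one
more step kills that subgroup. -/
theorem IsPGroup.exists_gammaP_eq_bot (hp : p.Prime) {G : Type*} [Group G] [Finite G]
    (hG : IsPGroup p G) : ∃ n, gammaP p n = (⊥ : Subgroup G) := by
  induction hcard : Nat.card G using Nat.strong_induction_on generalizing G with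
  | _ m ih =>
    rcases subsingleton_or_nontrivial G with _ | _
    · exact ⟨0, Subsingleton.elim _ _⟩
    have := Fact.mk hp
    have := hG.center_nontrivial
    obtain ⟨k, hk, hcardZ⟩ := (hG.to_subgroup (Subgroup.center G)).nontrivial_iff_card.mp ‹_›
    obtain ⟨z, hz⟩ := exists_prime_orderOf_dvd_card' (G := Subgroup.center G) p
      (hcardZ ▸ dvd_pow_self p hk.ne')
    set K := Subgroup.zpowers (z : G)
    have hKZ : K ≤ Subgroup.center G := (Subgroup.zpowers_le).mpr z.2
    have : K.Normal :=
      ⟨fun x hx g => by rwa [Subgroup.mem_center_iff.mp (hKZ hx) g, mul_inv_cancel_right]⟩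
    have hKp : ∀ x ∈ K, x ^ p = 1 := by
      rintro _ ⟨i, rfl⟩
      rw [← zpow_natCast, ← zpow_mul, mul_comm, zpow_mul, zpow_natCast, ← Subgroup.coe_pow, ← hz,
        pow_orderOf_eq_one]
      simp
    have hlt : Nat.card (G ⧸ K) < m := by
      rw [← hcard, Subgroup.card_eq_card_quotient_mul_card_subgroup K, Nat.card_zpowers,
        Subgroup.orderOf_coe, hz]
      exact lt_mul_of_one_lt_right Nat.card_pos hp.one_lt
    obtain ⟨n, hn⟩ := ih _ hlt (hG.to_quotient K) rfl
    have hnK : gammaP p n ≤ K := by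
      rw [← QuotientGroup.ker_mk' K, ← Subgroup.map_eq_bot_iff, ← le_bot_iff, ← hn]
      exact map_gammaP_le _ n
    exact ⟨n + 2, gammaP_eq_bot_of_le_center hKZ hKp ((gammaP_succ_le n).trans hnK)⟩

theorem IsResiduallyPFinite.iInf_gammaP_eq_bot (hp : p.Prime) {G : Type*} [Group G]
    (h : IsResiduallyPFinite p G) : ⨅ n, gammaP p n = (⊥ : Subgroup G) := by
  refine eq_bot_iff.mpr fun g hg => of_not_not fun hg1 => ?_
  obtain ⟨H, _, _, φ, hH, hφ⟩ := h g hg1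
  obtain ⟨n, hn⟩ := hH.exists_gammaP_eq_bot hp
  have := map_gammaP_le φ n ⟨g, Subgroup.mem_iInf.mp hg n, rfl⟩
  rw [hn, Subgroup.mem_bot] at this
  exact hφ this

theorem QuotientGroup.finite_of_commutatorElement_mem_of_pow_mem {G : Type*} [Group G]
    [Group.FG G] {N : Subgroup G} [N.Normal] (hp : 0 < p) (hcomm : ∀ a b : G, ⁅a, b⁆ ∈ N)
    (hpow : ∀ a : G, a ^ p ∈ N) : Finite (G ⧸ N) := by
  let : CommGroup (G ⧸ N) :=
    { mul_comm := fun x y => by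
        induction x using QuotientGroup.induction_on
        induction y using QuotientGroup.induction_on
        exact commutatorElement_eq_one_iff_mul_comm.mp
          ((QuotientGroup.eq_one_iff _).mpr (hcomm _ _)) }
  refine CommGroup.finite_of_fg_isMulTorsion _ fun x => ?_
  induction x using QuotientGroup.induction_on with
  | H a => exact isOfFinOrder_iff_pow_eq_one.mpr ⟨p, hp, (QuotientGroup.eq_one_iff _).mpr (hpow a)⟩

theorem finiteIndex_gammaP {G : Type*} [Group G] [Group.FG G] (hp : 0 < p) :
    ∀ n, (gammaP p n (G := G)).FiniteIndex
  | 0 | 1 => inferInstanceAs (⊤ : Subgroup G).FiniteIndex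
  | n + 2 => by
    have := finiteIndex_gammaP (G := G) hp (n + 1)
    have := Subgroup.fg_of_index_ne_zero (gammaP p (n + 1) (G := G))
    have : Finite (gammaP p (n + 1) ⧸ (gammaP p (n + 2)).subgroupOf (gammaP p (n + 1))) :=
      QuotientGroup.finite_of_commutatorElement_mem_of_pow_mem hp
        (fun a b => commutatorElement_mem_gammaP_succ (a : G) b.2)
        (fun a => pow_mem_gammaP_succ a.2)
    constructor
    rw [← Subgroup.relIndex_mul_index (gammaP_succ_le (n + 1))]
    exact mul_ne_zero Subgroup.index_ne_zero_of_finite Subgroup.FiniteIndex.index_ne_zero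

theorem isPGroup_quotient_gammaP {G : Type*} [Group G] (n : ℕ) :
    IsPGroup p (G ⧸ gammaP p n (G := G)) := by
  intro x
  induction x using QuotientGroup.induction_on with
  | H g =>
    exact ⟨n, (QuotientGroup.eq_one_iff _).mpr (gammaP_succ_le n (pow_prime_pow_mem_gammaP g n))⟩

theorem isResiduallyPFinite_of_iInf_gammaP_eq_bot (hp : p.Prime) {G : Type*} [Group G]
    [Group.FG G] (h : ⨅ n, gammaP p n = (⊥ : Subgroup G)) : IsResiduallyPFinite p G := by
  intro g hg
  obtain ⟨n, hn⟩ : ∃ n, g ∉ gammaP p n := by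
    by_contra! hall
    exact hg (by rw [← Subgroup.mem_bot, ← h]; exact Subgroup.mem_iInf.mpr hall)
  have := finiteIndex_gammaP (G := G) hp.pos n
  let e : Shrink.{0} (G ⧸ gammaP p n) ≃* G ⧸ gammaP p n := Shrink.mulEquiv
  refine ⟨Shrink.{0} (G ⧸ gammaP p n), inferInstance, inferInstance,
    e.symm.toMonoidHom.comp (QuotientGroup.mk' _), (isPGroup_quotient_gammaP n).of_equiv e.symm, ?_⟩
  simpa using hn

end ResiduallyPFinite

section AlmostDirectProduct

variable {B C : Type*} [Group B] [Group C] (f : B →* C) (s : C →* B) (p : ℕ)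

def kerGammaP (n : ℕ) : Subgroup B :=
  (gammaP p n : Subgroup f.ker).map f.ker.subtype

instance (n : ℕ) : (kerGammaP f p n).Normal :=
  inferInstanceAs ((gammaP p n : Subgroup f.ker).map f.ker.subtype).Normal

theorem pow_mem_kerGammaP_succ {n : ℕ} {x : B} (hx : x ∈ kerGammaP f p n) :
    x ^ p ∈ kerGammaP f p (n + 1) := by
  obtain ⟨a, ha, rfl⟩ := hx
  exact ⟨a ^ p, pow_mem_gammaP_succ ha, map_pow _ _ _⟩

theorem commutator_kerGammaP_ker_le (n : ℕ) :
    ⁅kerGammaP f p n, f.ker⁆ ≤ kerGammaP f p (n + 1) := by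
  rw [← f.ker.range_subtype, MonoidHom.range_eq_map, kerGammaP, kerGammaP,
    ← Subgroup.map_commutator, Subgroup.commutator_comm]
  exact Subgroup.map_mono (commutator_top_gammaP_le n)

variable {f s p}

theorem commutator_kerGammaP_range_le (hact : ⁅s.range, f.ker⁆ ≤ kerGammaP f p 2) :
    ∀ n, ⁅kerGammaP f p n, s.range⁆ ≤ kerGammaP f p (n + 1)
  | 0 => Subgroup.commutator_le_left _ _
  | n + 1 => by
    have := commutator_map_gammaP_le f.ker.subtype (N := kerGammaP f p)
      (fun _ _ => pow_mem_kerGammaP_succ f p) (by simpa using commutator_kerGammaP_ker_le f p) n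
      (X := s.range) (k := 1) (by simpa using hact)
    rw [Nat.add_comm 1 n] at this
    rwa [Subgroup.commutator_comm]

theorem commutator_ker_map_gammaP_le (hact : ⁅s.range, f.ker⁆ ≤ kerGammaP f p 2) (n : ℕ) :
    ⁅f.ker, (gammaP p (n + 1)).map s⁆ ≤ kerGammaP f p (n + 2) := by
  have := commutator_map_gammaP_le s (N := kerGammaP f p) (fun _ _ => pow_mem_kerGammaP_succ f p)
    (commutator_kerGammaP_range_le hact) n (X := f.ker) (k := 1)
    (by rwa [Subgroup.commutator_comm])
  rwa [Nat.add_comm 1 n] at this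

theorem ker_sup_range_eq_top (hsec : Function.LeftInverse f s) : f.ker ⊔ s.range = ⊤ := by
  refine eq_top_iff.mpr fun b _ => ?_
  have hb : b * (s (f b))⁻¹ ∈ f.ker := by simp [hsec (f b)]
  simpa using Subgroup.mul_mem_sup hb (s.mem_range.mpr ⟨f b, rfl⟩)

theorem Group.fg_of_leftInverse [Group.FG f.ker] [Group.FG C] (hsec : Function.LeftInverse f s) :
    Group.FG B := by
  rw [Group.fg_def, ← ker_sup_range_eq_top hsec]
  exact ((Group.fg_iff_subgroup_fg _).mp ‹_›).sup ((Group.fg_iff_subgroup_fg _).mp inferInstance)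

variable (f s p) in
/-- The subgroup `γₙᵖ A ⋊ γₙᵖ C` of `B = A ⋊ C`, where `A = ker f`. -/
def semidirectGammaP (n : ℕ) : Subgroup B :=
  kerGammaP f p n ⊔ (gammaP p n).map s

theorem semidirectGammaP_normal (hsec : Function.LeftInverse f s)
    (hact : ⁅s.range, f.ker⁆ ≤ kerGammaP f p 2) (n : ℕ) :
    (semidirectGammaP f s p (n + 1)).Normal := by
  have hcl : semidirectGammaP f s p (n + 1) =
      Subgroup.closure (kerGammaP f p (n + 1) ∪ (gammaP p (n + 1)).map s) := by
    rw [Subgroup.closure_union, Subgroup.closure_eq, Subgroup.closure_eq, semidirectGammaP]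
  rw [← Subgroup.normalizer_eq_top_iff, eq_top_iff, ← ker_sup_range_eq_top hsec, sup_le_iff, hcl,
    Subgroup.le_normalizer_closure_iff, Subgroup.le_normalizer_closure_iff, ← hcl]
  constructor
  · rintro a ha x (hx | ⟨c, hc, rfl⟩)
    · exact Subgroup.mem_sup_left (Subgroup.Normal.conj_mem inferInstance x hx a)
    · rw [← MulAut.conj_apply, conj_eq_commutatorElement_mul]
      refine mul_mem (Subgroup.mem_sup_left ?_) (Subgroup.mem_sup_right ⟨c, hc, rfl⟩)
      exact Subgroup.map_mono (gammaP_succ_le _)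
        (commutator_ker_map_gammaP_le hact n (Subgroup.commutator_mem_commutator ha ⟨c, hc, rfl⟩))
  · rintro _ ⟨c, rfl⟩ x (hx | ⟨d, hd, rfl⟩)
    · exact Subgroup.mem_sup_left (Subgroup.Normal.conj_mem inferInstance x hx (s c))
    · refine Subgroup.mem_sup_right ⟨c * d * c⁻¹, ?_, by simp⟩
      exact Subgroup.Normal.conj_mem inferInstance d hd c

theorem commutator_top_semidirectGammaP_le (hsec : Function.LeftInverse f s)
    (hact : ⁅s.range, f.ker⁆ ≤ kerGammaP f p 2) (n : ℕ) :
    ⁅(⊤ : Subgroup B), semidirectGammaP f s p (n + 1)⁆ ≤ semidirectGammaP f s p (n + 2) := by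
  have := semidirectGammaP_normal hsec hact (n + 1)
  rw [← ker_sup_range_eq_top hsec, semidirectGammaP]
  refine Subgroup.commutator_sup_left_le (Subgroup.commutator_sup_right_le ?_ ?_)
    (Subgroup.commutator_sup_right_le ?_ ?_)
  · rw [Subgroup.commutator_comm]
    exact (commutator_kerGammaP_ker_le f p _).trans le_sup_left
  · exact (commutator_ker_map_gammaP_le hact n).trans le_sup_left
  · rw [Subgroup.commutator_comm]
    exact (commutator_kerGammaP_range_le hact _).trans le_sup_left
  · rw [MonoidHom.range_eq_map, ← Subgroup.map_commutator]
    exact (Subgroup.map_mono (commutator_top_gammaP_le _)).trans le_sup_right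

theorem pow_mem_semidirectGammaP_succ (hact : ⁅s.range, f.ker⁆ ≤ kerGammaP f p 2) {n : ℕ}
    {x : B} (hx : x ∈ semidirectGammaP f s p n) : x ^ p ∈ semidirectGammaP f s p (n + 1) := by
  obtain ⟨u, hu, _, ⟨c, hc, rfl⟩, rfl⟩ := Subgroup.mem_sup_of_normal_left.mp hx
  have huc : ⁅u, s c⁆ ∈ kerGammaP f p (n + 1) :=
    commutator_kerGammaP_range_le hact n (Subgroup.commutator_mem_commutator hu ⟨c, rfl⟩)
  rw [← inv_mul_cancel_right ((u * s c) ^ p) (u ^ p * s c ^ p)]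
  refine mul_mem (Subgroup.mem_sup_left (Subgroup.mul_pow_mul_inv_mem huc p)) (mul_mem
    (Subgroup.mem_sup_left (pow_mem_kerGammaP_succ f p hu)) (Subgroup.mem_sup_right ?_))
  exact ⟨c ^ p, pow_mem_gammaP_succ hc, map_pow _ _ _⟩

theorem gammaP_le_semidirectGammaP (hsec : Function.LeftInverse f s)
    (hact : ⁅s.range, f.ker⁆ ≤ kerGammaP f p 2) (n : ℕ) :
    gammaP p (n + 1) ≤ semidirectGammaP f s p (n + 1) := by
  refine gammaP_le_of_commutator_le ?_ (commutator_top_semidirectGammaP_le hsec hact)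
    (fun _ _ => pow_mem_semidirectGammaP_succ hact) n
  rw [semidirectGammaP, kerGammaP, gammaP_one, gammaP_one, ← MonoidHom.range_eq_map,
    ← MonoidHom.range_eq_map, Subgroup.range_subtype, ker_sup_range_eq_top hsec]

theorem mem_gammaP_ker_of_mem_gammaP (hsec : Function.LeftInverse f s)
    (hact : ⁅s.range, f.ker⁆ ≤ kerGammaP f p 2) {n : ℕ} {b : B} (hb : b ∈ gammaP p n)
    (hfb : b ∈ f.ker) : (⟨b, hfb⟩ : f.ker) ∈ gammaP p n := by
  cases n with
  | zero => trivial
  | succ n =>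
    obtain ⟨_, ⟨a, ha, rfl⟩, _, ⟨c, -, rfl⟩, rfl⟩ :=
      Subgroup.mem_sup_of_normal_left.mp (gammaP_le_semidirectGammaP hsec hact n hb)
    obtain rfl : c = 1 := by simpa [MonoidHom.mem_ker.mp a.2, hsec c] using hfb
    simpa using ha

end AlmostDirectProduct

theorem statement4_general (p : ℕ) (hp : p.Prime)
    {B C : Type*} [Group B] [Group C]
    (f : B →* C)
    (s : C →* B) (hs : ∀ c, f (s c) = c)
    (hadp : ∀ a ∈ f.ker, ∀ c : C,
      s c * a * (s c)⁻¹ * a⁻¹ ∈ (gammaP p 2 : Subgroup ↥f.ker).map f.ker.subtype)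
    (hA : Group.FG ↥f.ker) (hC : Group.FG C)
    (hresA : IsResiduallyPFinite p ↥f.ker) (hresC : IsResiduallyPFinite p C) :
    IsResiduallyPFinite p B := by
  have hact : ⁅s.range, f.ker⁆ ≤ kerGammaP f p 2 :=
    Subgroup.commutator_le.mpr (by rintro _ ⟨c, rfl⟩ a ha; exact hadp a ha c)
  have := Group.fg_of_leftInverse hs
  refine isResiduallyPFinite_of_iInf_gammaP_eq_bot hp (eq_bot_iff.mpr fun b hb => ?_)
  rw [Subgroup.mem_iInf] at hb
  have hfb : b ∈ f.ker := by
    rw [MonoidHom.mem_ker, ← Subgroup.mem_bot, ← hresC.iInf_gammaP_eq_bot hp, Subgroup.mem_iInf]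
    exact fun n => map_gammaP_le f n ⟨b, hb n, rfl⟩
  have hbA : (⟨b, hfb⟩ : f.ker) ∈ ⨅ n, gammaP p n :=
    Subgroup.mem_iInf.mpr fun n => mem_gammaP_ker_of_mem_gammaP hs hact (hb n) hfb
  rw [hresA.iInf_gammaP_eq_bot hp, Subgroup.mem_bot] at hbA
  exact congrArg Subtype.val hbA

/-- A `p`-almost direct product of finitely generated residually `p`-finite groups is
residually `p`-finite. -/
theorem statement4 (p : ℕ) (hp : p.Prime)
    {B C : Type*} [Group B] [Group C]
    (f : B →* C) (hf : Function.Surjective f)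
    (s : C →* B) (hs : ∀ c, f (s c) = c)
    (hadp : ∀ a ∈ f.ker, ∀ c : C,
      s c * a * (s c)⁻¹ * a⁻¹ ∈ (gammaP p 2 : Subgroup ↥f.ker).map f.ker.subtype)
    (hA : Group.FG ↥f.ker) (hC : Group.FG C)
    (hresA : IsResiduallyPFinite p ↥f.ker) (hresC : IsResiduallyPFinite p C) :
    IsResiduallyPFinite p B :=
  statement4_general p hp f s hs hadp hA hC hresA hresC
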